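/- arXiv:1706.00142 — 2 statements merged into one kernel-verified Lean document; each statement's English description precedes it below -/
import Mathlib

section
/- For a bounded measurable set Ω ⊆ ℝ³ define ω₁(Ω) as the infimum of (1/2)∫_Ω ‖∇Φ(x)‖² dx + S[ξ] over all (Φ,ξ) ∈ 𝒜 with ⟨Φ,ξ⟩_F = 1. Let D̃ ⊆ D be bounded measurable sets in ℝ³, and assume there exists at least one pair (Φ,ξ) ∈ 𝒜 with ⟨Φ,ξ⟩_F = 1. Then ω₁(D̃) ≤ ω₁(D). -/
open MeasureTheory RealInnerProductSpace

noncomputable section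

abbrev E2 : Type := EuclideanSpace ℝ (Fin 2)
abbrev E3 : Type := EuclideanSpace ℝ (Fin 3)

/-- Embedding of the free surface plane: `p = (x,y) ↦ (x,y,0)`. -/
def emb (p : E2) : E3 := (WithLp.equiv 2 (Fin 3 → ℝ)).symm ![p 0, p 1, 0]

/-- Dirichlet energy `D[Φ] = (1/2)∫_D ‖∇Φ‖²`. -/
def Dir (D : Set E3) (Φ : E3 → ℝ) : ℝ := (1/2) * ∫ x in D, ‖gradient Φ x‖^2

/-- Free surface energy `S[ξ] = (1/2)∫_F (ξ² + Bo⁻¹‖∇ξ‖²)`. -/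
def Surf (F : Set E2) (Bo : ℝ) (ξ : E2 → ℝ) : ℝ :=
  (1/2) * ∫ p in F, (ξ p ^ 2 + Bo⁻¹ * ‖gradient ξ p‖^2)

/-- The pairing `⟨Φ,ξ⟩_F = ∫_F Φ(x,y,0) ξ(x,y)`. -/
def pairF (F : Set E2) (Φ : E3 → ℝ) (ξ : E2 → ℝ) : ℝ := ∫ p in F, Φ (emb p) * ξ p

/-- `(ω,Φ,ξ)` is a weak solution of the sloshing problem with surface tension. -/
def IsWeakSol (D : Set E3) (F : Set E2) (Bo ω : ℝ) (Φ : E3 → ℝ) (ξ : E2 → ℝ) : Prop :=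
  ContDiff ℝ 1 Φ ∧ ContDiff ℝ 1 ξ ∧
  (∀ f : E3 → ℝ, ContDiff ℝ 1 f →
    (∫ x in D, ⟪gradient Φ x, gradient f x⟫) = ω * ∫ p in F, ξ p * f (emb p)) ∧
  (∀ g : E2 → ℝ, ContDiff ℝ 1 g →
    (∫ p in F, (ξ p * g p + Bo⁻¹ * ⟪gradient ξ p, gradient g p⟫))
      = ω * ∫ p in F, Φ (emb p) * g p)

/-- The admissible class `𝒜`: pairs of C¹ functions with zero mean over `F`. -/
def Adm (F : Set E2) (Φ : E3 → ℝ) (ξ : E2 → ℝ) : Prop :=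
  ContDiff ℝ 1 Φ ∧ ContDiff ℝ 1 ξ ∧
  (∫ p in F, Φ (emb p)) = 0 ∧ (∫ p in F, ξ p) = 0

/-!
Both energies are minimised over the same normalised admissible class and share the surface
term, while for a fixed `C¹` potential the Dirichlet energy over `D̃ ⊆ D` is at most the one
over `D` (the integrand is nonnegative, and integrable on the bounded set `D`). Taking infima,
which are genuine because all energies are nonnegative, gives the claim.
-/

/-- The lower bound `c` matters: a set of reals that is not bounded below has junk `sInf = 0`. -/
theorem csInf_setOf_exists₂_mono {α β : Type*} {P : α → β → Prop} {f g : α → β → ℝ} {c : ℝ}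
    (hne : ∃ a b, P a b) (hc : ∀ a b, P a b → c ≤ f a b)
    (hfg : ∀ a b, P a b → f a b ≤ g a b) :
    sInf {r | ∃ a b, P a b ∧ r = f a b} ≤ sInf {r | ∃ a b, P a b ∧ r = g a b} := by
  obtain ⟨a₀, b₀, h₀⟩ := hne
  have hbdd : BddBelow {r | ∃ a b, P a b ∧ r = f a b} := by
    refine ⟨c, ?_⟩
    rintro r ⟨a, b, hab, rfl⟩
    exact hc a b hab
  refine le_csInf ⟨_, a₀, b₀, h₀, rfl⟩ ?_
  rintro r ⟨a, b, hab, rfl⟩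
  exact (csInf_le hbdd ⟨a, b, hab, rfl⟩).trans (hfg a b hab)

theorem ContDiff.continuous_gradient {𝕜 F : Type*} [RCLike 𝕜] [NormedAddCommGroup F]
    [InnerProductSpace 𝕜 F] [CompleteSpace F] {f : F → 𝕜} (hf : ContDiff 𝕜 1 f) :
    Continuous (gradient f) :=
  (InnerProductSpace.toDual 𝕜 F).symm.continuous.comp (hf.continuous_fderiv one_ne_zero)

theorem Continuous.integrableOn_of_isBounded {X E : Type*} [MetricSpace X] [ProperSpace X]
    [MeasurableSpace X] [OpensMeasurableSpace X] [NormedAddCommGroup E] {μ : Measure X}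
    [IsFiniteMeasureOnCompacts μ] {f : X → E} {s : Set X} (hf : Continuous f)
    (hs : Bornology.IsBounded s) : IntegrableOn f s μ :=
  (hf.continuousOn.integrableOn_compact hs.isCompact_closure).mono_set subset_closure

theorem dir_nonneg (D : Set E3) (Φ : E3 → ℝ) : 0 ≤ Dir D Φ :=
  mul_nonneg (by norm_num) (integral_nonneg fun _ => sq_nonneg _)

theorem surf_nonneg (F : Set E2) {Bo : ℝ} (hBo : 0 < Bo) (ξ : E2 → ℝ) : 0 ≤ Surf F Bo ξ :=
  mul_nonneg (by norm_num) <| integral_nonneg fun _ =>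
    add_nonneg (sq_nonneg _) (mul_nonneg (inv_nonneg.2 hBo.le) (sq_nonneg _))

theorem dir_mono_set {D Dt : Set E3} (hD : Bornology.IsBounded D) (hsub : Dt ⊆ D)
    {Φ : E3 → ℝ} (hΦ : ContDiff ℝ 1 Φ) : Dir Dt Φ ≤ Dir D Φ := by
  have hint : IntegrableOn (fun x => ‖gradient Φ x‖ ^ 2) D :=
    (hΦ.continuous_gradient.norm.pow 2).integrableOn_of_isBounded hD
  unfold Dir
  gcongr 1 / 2 * ?_
  exact setIntegral_mono_set hint (.of_forall fun _ => sq_nonneg _) hsub.eventuallyLE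

theorem domain_monotonicity_general
    (F : Set E2)
    (Bo : ℝ) (hBo : 0 < Bo)
    (D Dt : Set E3) (hDb : Bornology.IsBounded D)
    (hsub : Dt ⊆ D)
    (hne : ∃ Φ : E3 → ℝ, ∃ ξ : E2 → ℝ, Adm F Φ ξ ∧ pairF F Φ ξ = 1) :
    sInf {r : ℝ | ∃ Φ : E3 → ℝ, ∃ ξ : E2 → ℝ, Adm F Φ ξ ∧ pairF F Φ ξ = 1 ∧
        r = Dir Dt Φ + Surf F Bo ξ}
      ≤ sInf {r : ℝ | ∃ Φ : E3 → ℝ, ∃ ξ : E2 → ℝ, Adm F Φ ξ ∧ pairF F Φ ξ = 1 ∧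
        r = Dir D Φ + Surf F Bo ξ} := by
  simp only [← and_assoc]
  exact csInf_setOf_exists₂_mono hne
    (fun Φ ξ _ => add_nonneg (dir_nonneg Dt Φ) (surf_nonneg F hBo ξ))
    (fun Φ ξ h => add_le_add_left (dir_mono_set hDb hsub h.1.1) _)

/-- Theorem 4.3, domain monotonicity. If `D̃ ⊆ D` share the same
free surface `F`, then the fundamental sloshing eigenvalue of the smaller container
is at most that of the larger one. -/
theorem domain_monotonicity
    (F : Set E2) (hF : Bornology.IsBounded F) (hFm : MeasurableSet F)
    (Bo : ℝ) (hBo : 0 < Bo)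
    (D Dt : Set E3) (hDb : Bornology.IsBounded D) (hDtb : Bornology.IsBounded Dt)
    (hDm : MeasurableSet D) (hDtm : MeasurableSet Dt)
    (hsub : Dt ⊆ D)
    (hne : ∃ Φ : E3 → ℝ, ∃ ξ : E2 → ℝ, Adm F Φ ξ ∧ pairF F Φ ξ = 1) :
    sInf {r : ℝ | ∃ Φ : E3 → ℝ, ∃ ξ : E2 → ℝ, Adm F Φ ξ ∧ pairF F Φ ξ = 1 ∧
        r = Dir Dt Φ + Surf F Bo ξ}
      ≤ sInf {r : ℝ | ∃ Φ : E3 → ℝ, ∃ ξ : E2 → ℝ, Adm F Φ ξ ∧ pairF F Φ ξ = 1 ∧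
        r = Dir D Φ + Surf F Bo ξ} :=
  domain_monotonicity_general F Bo hBo D Dt hDb hsub hne
end
end

section
/- Let ω₁ > 0 and let Φ₁ : ℝ³ → ℝ, ξ₁ : ℝ² → ℝ be C¹ functions with (Φ₁,ξ₁) ∈ 𝒜 and ⟨Φ₁,ξ₁⟩_F = 1 such that: (K) for every C¹ f : ℝ³ → ℝ, ∫_D ⟨∇Φ₁(x), ∇f(x)⟩ dx = ω₁ ∫_F ξ₁(p) f(p,0) dp; (D₀) for every C¹ g : ℝ² → ℝ, ∫_F ξ₁(p) g(p) dp = ω₁ ∫_F Φ₁(p,0) g(p) dp; and (Φ₁,ξ₁) minimizes the zero-surface-tension energy, i.e. D[Φ₁] + S₀[ξ₁] ≤ D[Φ] + S₀[ξ] for every (Φ,ξ) ∈ 𝒜 with ⟨Φ,ξ⟩_F = 1, where ω₁ = D[Φ₁] + S₀[ξ₁]. Then: (i) ∫_F (√ω₁·Φ₁(p,0))² dp = 1; (ii) ∫_D ‖∇(√ω₁·Φ₁)(x)‖² dx = ω₁²; and (iii) for every C¹ function Ψ : ℝ³ → ℝ with ∫_F Ψ(p,0) dp = 0 and ∫_F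 Ψ(p,0)² dp = 1 one has ∫_D ‖∇Ψ(x)‖² dx ≥ ω₁². -/
/-!
Testing (D₀) with `g = Φ₁|_F` and (K) with `f = Φ₁` against the normalisation `⟨Φ₁, ξ₁⟩_F = 1`
gives `ω₁ ∫_F Φ₁² = 1` and `∫_D ‖∇Φ₁‖² = ω₁`, which are (i) and (ii) after scaling by `√ω₁`.
For (iii), the pair `(Ψ / √ω₁, √ω₁ Ψ|_F)` is admissible with pairing `1`, so minimality bounds
`ω₁` by its energy `∫_D ‖∇Ψ‖² / (2 ω₁) + ω₁ / 2`, i.e. `ω₁² ≤ ∫_D ‖∇Ψ‖²`.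
-/

open MeasureTheory RealInnerProductSpace

noncomputable section

/-- The zero-surface-tension (Bo = ∞) free surface energy `S₀[ξ] = (1/2)∫_F ξ²`. -/
def Surf0 (F : Set E2) (ξ : E2 → ℝ) : ℝ := (1/2) * ∫ p in F, ξ p ^ 2

lemma contDiff_emb {n : WithTop ℕ∞} : ContDiff ℝ n emb := by
  have hcoords : ContDiff ℝ n (fun p : E2 => (![p 0, p 1, 0] : Fin 3 → ℝ)) := by
    refine contDiff_pi.2 fun i => ?_
    fin_cases i
    · exact (EuclideanSpace.proj (0 : Fin 2) : E2 →L[ℝ] ℝ).contDiff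
    · exact (EuclideanSpace.proj (1 : Fin 2) : E2 →L[ℝ] ℝ).contDiff
    · exact contDiff_const
  exact (PiLp.continuousLinearEquiv 2 ℝ (fun _ : Fin 3 => ℝ)).symm.contDiff.comp hcoords

section Gradient

variable {E : Type*} [NormedAddCommGroup E] [InnerProductSpace ℝ E] [CompleteSpace E]

lemma gradient_const_mul {f : E → ℝ} {x : E} (hf : DifferentiableAt ℝ f x) (c : ℝ) :
    gradient (fun y => c * f y) x = c • gradient f x := by
  simp only [gradient, fderiv_const_mul hf c, map_smul]

lemma integral_norm_sq_gradient_const_mul [MeasurableSpace E] (μ : Measure E) {f : E → ℝ}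
    (hf : Differentiable ℝ f) (c : ℝ) :
    ∫ x, ‖gradient (fun y => c * f y) x‖ ^ 2 ∂μ = c ^ 2 * ∫ x, ‖gradient f x‖ ^ 2 ∂μ := by
  simp only [gradient_const_mul (hf _), norm_smul, mul_pow, Real.norm_eq_abs, sq_abs,
    integral_const_mul]

end Gradient

section Admissible

variable {D : Set E3} {F : Set E2}

lemma Adm.const_mul {Φ : E3 → ℝ} {ξ : E2 → ℝ} (h : Adm F Φ ξ) (a b : ℝ) :
    Adm F (fun y => a * Φ y) (fun p => b * ξ p) := by
  obtain ⟨hΦ, hξ, hΦmean, hξmean⟩ := h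
  refine ⟨contDiff_const.mul hΦ, contDiff_const.mul hξ, ?_, ?_⟩
  · rw [integral_const_mul, hΦmean, mul_zero]
  · rw [integral_const_mul, hξmean, mul_zero]

lemma adm_trace {Ψ : E3 → ℝ} (hΨ : ContDiff ℝ 1 Ψ) (hmean : ∫ p in F, Ψ (emb p) = 0) :
    Adm F Ψ (fun p => Ψ (emb p)) :=
  ⟨hΨ, hΨ.comp contDiff_emb, hmean, hmean⟩

lemma pairF_const_mul (Φ : E3 → ℝ) (ξ : E2 → ℝ) (a b : ℝ) :
    pairF F (fun y => a * Φ y) (fun p => b * ξ p) = a * b * pairF F Φ ξ := by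
  rw [pairF, pairF, ← integral_const_mul]
  congr 1 with p
  ring

lemma pairF_trace (Ψ : E3 → ℝ) : pairF F Ψ (fun p => Ψ (emb p)) = ∫ p in F, Ψ (emb p) ^ 2 := by
  simp only [pairF, sq]

lemma Surf0_const_mul (ξ : E2 → ℝ) (b : ℝ) : Surf0 F (fun p => b * ξ p) = b ^ 2 * Surf0 F ξ := by
  simp only [Surf0, mul_pow, integral_const_mul]
  ring

lemma Dir_const_mul {Φ : E3 → ℝ} (hΦ : Differentiable ℝ Φ) (a : ℝ) :
    Dir D (fun y => a * Φ y) = a ^ 2 * Dir D Φ := by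
  rw [Dir, Dir, integral_norm_sq_gradient_const_mul _ hΦ]
  ring

lemma sq_le_integral_norm_sq_gradient {ω : ℝ} (hω : 0 < ω)
    (hmin : ∀ Φ : E3 → ℝ, ∀ ξ : E2 → ℝ, Adm F Φ ξ → pairF F Φ ξ = 1 →
      ω ≤ Dir D Φ + Surf0 F ξ)
    {Ψ : E3 → ℝ} (hΨ : ContDiff ℝ 1 Ψ) (hmean : ∫ p in F, Ψ (emb p) = 0)
    (hnorm : ∫ p in F, Ψ (emb p) ^ 2 = 1) :
    ω ^ 2 ≤ ∫ x in D, ‖gradient Ψ x‖ ^ 2 := by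
  set t := Real.sqrt ω
  have ht : t ≠ 0 := (Real.sqrt_pos.2 hω).ne'
  have ht2 : t ^ 2 = ω := Real.sq_sqrt hω.le
  have hpair : pairF F (fun y => t⁻¹ * Ψ y) (fun p => t * Ψ (emb p)) = 1 := by
    rw [pairF_const_mul, pairF_trace, hnorm, inv_mul_cancel₀ ht, one_mul]
  have henergy := hmin _ _ ((adm_trace hΨ hmean).const_mul t⁻¹ t) hpair
  rw [Dir_const_mul (hΨ.differentiable one_ne_zero), Surf0_const_mul, Dir, Surf0, hnorm,
    inv_pow, ht2] at henergy
  have hI : ω * ω ≤ ω * (ω⁻¹ * ∫ x in D, ‖gradient Ψ x‖ ^ 2) := by nlinarith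
  rwa [← mul_assoc, mul_inv_cancel₀ hω.ne', one_mul, ← sq] at hI

end Admissible

section WeakEigenpair

variable {D : Set E3} {F : Set E2} {ω : ℝ} {Φ : E3 → ℝ} {ξ : E2 → ℝ}

lemma pairF_eq_integral_mul_comm : pairF F Φ ξ = ∫ p in F, ξ p * Φ (emb p) := by
  simp only [pairF, mul_comm]

lemma mul_integral_trace_sq_eq_one (hΦ : ContDiff ℝ 1 Φ)
    (hdyn : ∀ g : E2 → ℝ, ContDiff ℝ 1 g →
      (∫ p in F, ξ p * g p) = ω * ∫ p in F, Φ (emb p) * g p)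
    (hpair : pairF F Φ ξ = 1) :
    ω * ∫ p in F, Φ (emb p) ^ 2 = 1 := by
  calc ω * ∫ p in F, Φ (emb p) ^ 2 = ∫ p in F, ξ p * Φ (emb p) := by
        simpa only [sq] using (hdyn (fun p => Φ (emb p)) (hΦ.comp contDiff_emb)).symm
    _ = 1 := pairF_eq_integral_mul_comm.symm.trans hpair

lemma integral_norm_sq_gradient_eq (hΦ : ContDiff ℝ 1 Φ)
    (hkin : ∀ f : E3 → ℝ, ContDiff ℝ 1 f →
      (∫ x in D, ⟪gradient Φ x, gradient f x⟫) = ω * ∫ p in F, ξ p * f (emb p))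
    (hpair : pairF F Φ ξ = 1) :
    ∫ x in D, ‖gradient Φ x‖ ^ 2 = ω := by
  simp only [← real_inner_self_eq_norm_sq, hkin Φ hΦ, ← pairF_eq_integral_mul_comm, hpair,
    mul_one]

end WeakEigenpair

theorem zero_surface_tension_limit_general
    (D : Set E3) (F : Set E2)
    (ω₁ : ℝ) (hω₁ : 0 < ω₁)
    (Φ₁ : E3 → ℝ) (ξ₁ : E2 → ℝ)
    (hadm : Adm F Φ₁ ξ₁) (hpair : pairF F Φ₁ ξ₁ = 1)
    (hK : ∀ f : E3 → ℝ, ContDiff ℝ 1 f →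
      (∫ x in D, ⟪gradient Φ₁ x, gradient f x⟫) = ω₁ * ∫ p in F, ξ₁ p * f (emb p))
    (hD0 : ∀ g : E2 → ℝ, ContDiff ℝ 1 g →
      (∫ p in F, ξ₁ p * g p) = ω₁ * ∫ p in F, Φ₁ (emb p) * g p)
    (hmin : ∀ Φ : E3 → ℝ, ∀ ξ : E2 → ℝ, Adm F Φ ξ → pairF F Φ ξ = 1 →
      Dir D Φ₁ + Surf0 F ξ₁ ≤ Dir D Φ + Surf0 F ξ)
    (hval : ω₁ = Dir D Φ₁ + Surf0 F ξ₁) :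
    (∫ p in F, (Real.sqrt ω₁ * Φ₁ (emb p)) ^ 2) = 1 ∧
    (∫ x in D, ‖gradient (fun y => Real.sqrt ω₁ * Φ₁ y) x‖ ^ 2) = ω₁ ^ 2 ∧
    (∀ Ψ : E3 → ℝ, ContDiff ℝ 1 Ψ →
      (∫ p in F, Ψ (emb p)) = 0 → (∫ p in F, Ψ (emb p) ^ 2) = 1 →
      ω₁ ^ 2 ≤ ∫ x in D, ‖gradient Ψ x‖ ^ 2) := by
  have hΦ₁ : ContDiff ℝ 1 Φ₁ := hadm.1
  have hsqrt : Real.sqrt ω₁ ^ 2 = ω₁ := Real.sq_sqrt hω₁.le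
  refine ⟨?_, ?_, fun Ψ hΨ hmean hnorm => ?_⟩
  · simp only [mul_pow, hsqrt, integral_const_mul]
    exact mul_integral_trace_sq_eq_one hΦ₁ hD0 hpair
  · rw [integral_norm_sq_gradient_const_mul _ (hΦ₁.differentiable one_ne_zero), hsqrt,
      integral_norm_sq_gradient_eq hΦ₁ hK hpair, sq]
  · exact sq_le_integral_norm_sq_gradient hω₁ (hval ▸ hmin) hΨ hmean hnorm

/-- Corollary 5.1. In the zero surface tension limit, a minimizer
`(Φ₁,ξ₁)` of the coupled variational problem yields, after rescaling by `√ω₁`, a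
normalized minimizer of the mixed Steklov–Neumann variational principle. -/
theorem zero_surface_tension_limit
    (D : Set E3) (F : Set E2)
    (hD : Bornology.IsBounded D) (hF : Bornology.IsBounded F)
    (hDm : MeasurableSet D) (hFm : MeasurableSet F)
    (ω₁ : ℝ) (hω₁ : 0 < ω₁)
    (Φ₁ : E3 → ℝ) (ξ₁ : E2 → ℝ)
    (hadm : Adm F Φ₁ ξ₁) (hpair : pairF F Φ₁ ξ₁ = 1)
    (hK : ∀ f : E3 → ℝ, ContDiff ℝ 1 f →
      (∫ x in D, ⟪gradient Φ₁ x, gradient f x⟫) = ω₁ * ∫ p in F, ξ₁ p * f (emb p))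
    (hD0 : ∀ g : E2 → ℝ, ContDiff ℝ 1 g →
      (∫ p in F, ξ₁ p * g p) = ω₁ * ∫ p in F, Φ₁ (emb p) * g p)
    (hmin : ∀ Φ : E3 → ℝ, ∀ ξ : E2 → ℝ, Adm F Φ ξ → pairF F Φ ξ = 1 →
      Dir D Φ₁ + Surf0 F ξ₁ ≤ Dir D Φ + Surf0 F ξ)
    (hval : ω₁ = Dir D Φ₁ + Surf0 F ξ₁) :
    (∫ p in F, (Real.sqrt ω₁ * Φ₁ (emb p)) ^ 2) = 1 ∧
    (∫ x in D, ‖gradient (fun y => Real.sqrt ω₁ * Φ₁ y) x‖ ^ 2) = ω₁ ^ 2 ∧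
    (∀ Ψ : E3 → ℝ, ContDiff ℝ 1 Ψ →
      (∫ p in F, Ψ (emb p)) = 0 → (∫ p in F, Ψ (emb p) ^ 2) = 1 →
      ω₁ ^ 2 ≤ ∫ x in D, ‖gradient Ψ x‖ ^ 2) :=
  zero_surface_tension_limit_general D F ω₁ hω₁ Φ₁ ξ₁ hadm hpair hK hD0 hmin hval
end
end
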